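/- Let z* be the output of the Groenevelt-type decomposition algorithm applied to the M-convex set B ∩ ℤ^S, where in the recursive step S₊ is the largest y-tight set of a minimal integral vector y ≥ x in the supermodular polyhedron Q and S₋ = S − S₊. Then z* satisfies z*(s) ≥ a for all s ∈ S₊ and z*(s) ≤ a+1 for all s ∈ S₋, where a = ⌊p(S)/|S|⌋; consequently z* satisfies the exchange condition (z*(t) ≥ z*(s)+2 implies z* + χ_s − χ_t ∉ B ∩ ℤ^S) and hence is a decreasingly minimal element of B ∩ ℤ^S. -/

import Mathlib

open Finset

variable {α : Type*} [Fintype α] [DecidableEq α]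

def Supermodular (p : Finset α → EReal) : Prop :=
  ∀ X Y : Finset α, p X + p Y ≤ p (X ∩ Y) + p (X ∪ Y)

/-- `p` takes values in `ℤ ∪ {−∞}`. -/
def IntegerValued (p : Finset α → EReal) : Prop :=
  ∀ X : Finset α, p X = ⊥ ∨ ∃ n : ℤ, p X = ((n : ℝ) : EReal)

/-- `x` belongs to the base-polyhedron `B'(p)`:
`x(S) = p(S)` and `x(Z) ≥ p(Z)` for every `Z ⊆ S`. -/
def memB (p : Finset α → EReal) (x : α → ℝ) : Prop :=
  ((∑ s, x s : ℝ) : EReal) = p Finset.univ ∧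
    ∀ Z : Finset α, p Z ≤ ((∑ s ∈ Z, x s : ℝ) : EReal)

/-- `x` is an integral element of the base-polyhedron `B'(p)` (a member of the
M-convex set `B ∩ ℤ^S`). -/
def memBZ (p : Finset α → EReal) (x : α → ℤ) : Prop :=
  ((((∑ s, x s : ℤ) : ℝ)) : EReal) = p Finset.univ ∧
    ∀ Z : Finset α, p Z ≤ ((((∑ s ∈ Z, x s : ℤ) : ℝ)) : EReal)

/-- Lexicographic comparison `l1 ≤_lex l2` of lists. -/
def lexLE {β : Type*} [LT β] (l1 l2 : List β) : Prop :=
  l1 = l2 ∨ List.Lex (· < ·) l1 l2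

/-- The components of `x` sorted in decreasing order. -/
noncomputable def sortDescR (x : α → ℝ) : List ℝ :=
  (Multiset.sort (Finset.univ.val.map x) (· ≤ ·)).reverse

/-- The components of the integral vector `x` sorted in decreasing order. -/
def sortDescZ (x : α → ℤ) : List ℤ :=
  (Multiset.sort (Finset.univ.val.map x) (· ≤ ·)).reverse

/-- `m` is a decreasingly minimal element of the base-polyhedron `B'(p)`. -/
def DecMinR (p : Finset α → EReal) (m : α → ℝ) : Prop :=
  memB p m ∧ ∀ y : α → ℝ, memB p y → lexLE (sortDescR m) (sortDescR y)

/-- `m` is a decreasingly minimal element of the M-convex set `B'(p) ∩ ℤ^S`. -/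
def DecMinZ (p : Finset α → EReal) (m : α → ℤ) : Prop :=
  memBZ p m ∧ ∀ y : α → ℤ, memBZ p y → lexLE (sortDescZ m) (sortDescZ y)

/-- The vector `z + χ_s − χ_t`. -/
def move (z : α → ℤ) (s t : α) : α → ℤ :=
  fun u => z u + (if u = s then 1 else 0) - (if u = t then 1 else 0)

/-- The values of `x` on the subset `T`, sorted in decreasing order. -/
def sortDescOn (T : Finset α) (x : α → ℤ) : List ℤ :=
  (Multiset.sort (T.val.map x) (· ≤ ·)).reverse

/-- `w` is an integral base of the restriction of `B'(p)` to `Splus`. -/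
def memRestrict (p : Finset α → EReal) (Splus : Finset α) (w : α → ℤ) : Prop :=
  ((((∑ s ∈ Splus, w s : ℤ) : ℝ)) : EReal) = p Splus ∧
    ∀ X : Finset α, X ⊆ Splus → p X ≤ ((((∑ s ∈ X, w s : ℤ) : ℝ)) : EReal)

/-- `w` is an integral base of the contraction of `B'(p)` to `S − Splus`
(described by `p₋(X) = p(X ∪ Splus) − p(Splus)`). -/
def memContract (p : Finset α → EReal) (Splus : Finset α) (w : α → ℤ) : Prop :=
  ((((∑ s ∈ Finset.univ \ Splus, w s : ℤ) : ℝ)) : EReal) = p Finset.univ - p Splus ∧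
    ∀ X : Finset α, X ⊆ Finset.univ \ Splus →
      p (X ∪ Splus) - p Splus ≤ ((((∑ s ∈ X, w s : ℤ) : ℝ)) : EReal)

/-!
Tight sets of a vector in `Q` form a lattice (supermodularity plus integrality of `p`), so a unit
move `u + χ_s − χ_t` keeps a base in `B` unless some tight set contains `t` but not `s`.
Minimality of `y` forces `y = x ≤ a + 1` off `S₊`, and since `S₊` is tight, bases of the
restriction and of the contraction glue to bases of `B`. If `z s < a ≤ y s` for some `s ∈ S₊`,
symmetric exchange between `z` and `y|S₊ ⊕ z|S₋` yields a move inside `S₊` that lowers `z`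
lexicographically; if `z t ≥ a + 2` for some `t ∈ S₋`, the smallest `z`-tight set containing
`S₊ ∪ {t}` has average at most `a + 1` on `S₋` and yields such a move inside `S₋`. The two bounds
confine every improving move to one side, which gives the exchange condition, and the exchange
condition implies dec-minimality by induction on `‖w − z‖₁`, again via symmetric exchange.
-/

theorem lexLE_iff_le {l₁ l₂ : List ℤ} : lexLE l₁ l₂ ↔ l₁ ≤ l₂ := by
  rw [lexLE, le_iff_lt_or_eq, eq_comm, or_comm]
  rfl

theorem lt_of_pairwise_ge_of_count_lt {l₁ l₂ : List ℤ} (h₁ : l₁.Pairwise (· ≥ ·))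
    (h₂ : l₂.Pairwise (· ≥ ·)) (c : ℤ) (hgt : ∀ d, c < d → l₁.count d = l₂.count d)
    (hc : l₁.count c < l₂.count c) : l₁ < l₂ := by
  induction l₁ generalizing l₂ with
  | nil =>
    obtain _ | ⟨b, l₂⟩ := l₂
    · simp at hc
    · exact List.Lex.nil
  | cons a l₁ ih =>
    obtain _ | ⟨b, l₂⟩ := l₂
    · simp at hc
    rw [List.pairwise_cons] at h₁ h₂
    rcases lt_trichotomy a b with hab | rfl | hba
    · exact List.Lex.rel hab
    · refine List.Lex.cons (ih h₁.2 h₂.2 (fun d hd => ?_) ?_)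
      · simpa [List.count_cons] using hgt d hd
      · simpa [List.count_cons] using hc
    · have hlt : ∀ d ∈ b :: l₂, d < a := by
        simp only [List.mem_cons, forall_eq_or_imp]
        exact ⟨hba, fun d hd => (h₂.1 d hd).trans_lt hba⟩
      by_cases hca : c < a
      · have h := hgt a hca
        rw [List.count_eq_zero.mpr fun ha => (hlt a ha).false] at h
        simp at h
      · rw [(List.count_eq_zero (l := b :: l₂)).mpr fun hc' => by have := hlt c hc'; omega] at hc
        omega

section Sorting

variable {β : Type*}

theorem pairwise_sortDescOn (T : Finset β) (z : β → ℤ) : (sortDescOn T z).Pairwise (· ≥ ·) :=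
  List.pairwise_reverse.mpr (Multiset.pairwise_sort _ _)

theorem count_sortDescOn (T : Finset β) (z : β → ℤ) (d : ℤ) :
    (sortDescOn T z).count d = (T.val.map z).count d := by
  rw [← Multiset.coe_count, sortDescOn, Multiset.coe_reverse, Multiset.sort_eq]

variable [DecidableEq β] {T : Finset β} {z : β → ℤ} {s t : β}

theorem move_apply (z : β → ℤ) (s t u : β) :
    move z s t u = z u + (if u = s then 1 else 0) - (if u = t then 1 else 0) := rfl

theorem sum_move (X : Finset β) (z : β → ℤ) (s t : β) :
    ∑ u ∈ X, move z s t u = ∑ u ∈ X, z u + (if s ∈ X then 1 else 0) - (if t ∈ X then 1 else 0) := by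
  simp only [move_apply, sum_sub_distrib, sum_add_distrib, sum_ite_eq']

theorem map_val_eq_cons_cons (hs : s ∈ T) (ht : t ∈ T) (hst : s ≠ t) (f : β → ℤ) :
    T.val.map f = f s ::ₘ f t ::ₘ ((T.erase s).erase t).val.map f := by
  have ht' : t ∈ T.val.erase s := (Multiset.mem_erase_of_ne hst.symm).mpr ht
  conv_lhs => rw [← Multiset.cons_erase (show s ∈ T.val from hs), ← Multiset.cons_erase ht']
  simp [erase_val]

theorem map_val_move (hs : s ∈ T) (ht : t ∈ T) (hst : s ≠ t) :
    T.val.map (move z s t) = (z s + 1) ::ₘ (z t - 1) ::ₘ ((T.erase s).erase t).val.map z := by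
  rw [map_val_eq_cons_cons hs ht hst]
  congr 2
  · simp [move_apply, hst]
  · simp [move_apply, hst.symm]
  · refine Multiset.map_congr rfl fun u hu => ?_
    simp only [Finset.mem_val, mem_erase] at hu
    simp [move_apply, hu.1, hu.2.1]

theorem sortDescOn_move_lt (hs : s ∈ T) (ht : t ∈ T) (h : z s + 2 ≤ z t) :
    sortDescOn T (move z s t) < sortDescOn T z := by
  have hst : s ≠ t := by rintro rfl; omega
  refine lt_of_pairwise_ge_of_count_lt (pairwise_sortDescOn _ _) (pairwise_sortDescOn _ _) (z t)
    (fun d hd => ?_) ?_ <;>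
  · simp only [count_sortDescOn, map_val_move hs ht hst, map_val_eq_cons_cons hs ht hst,
      Multiset.count_cons]
    split_ifs <;> omega

theorem sortDescOn_move_le (hs : s ∈ T) (ht : t ∈ T) (h : z s + 1 ≤ z t) :
    sortDescOn T (move z s t) ≤ sortDescOn T z := by
  obtain h | h := h.lt_or_eq
  · exact (sortDescOn_move_lt hs ht (by omega)).le
  have hst : s ≠ t := by rintro rfl; omega
  rw [sortDescOn, sortDescOn, map_val_move hs ht hst, map_val_eq_cons_cons hs ht hst, ← h,
    add_sub_cancel_right, Multiset.cons_swap]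

def IsDecMinOn (P : (β → ℤ) → Prop) (T : Finset β) (z : β → ℤ) : Prop :=
  P z ∧ ∀ w, P w → lexLE (sortDescOn T z) (sortDescOn T w)

theorem IsDecMinOn.not_move {P : (β → ℤ) → Prop} (hz : IsDecMinOn P T z) (hs : s ∈ T)
    (ht : t ∈ T) (h : z s + 2 ≤ z t) : ¬ P (move z s t) := fun hP =>
  (sortDescOn_move_lt hs ht h).not_ge (lexLE_iff_le.mp (hz.2 _ hP))

end Sorting

/-- `EReal` has no `IntCast`; this is the cast `ℤ → ℝ → EReal` used in the definitions. -/
def Int.toEReal (n : ℤ) : EReal := ((n : ℝ) : EReal)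

theorem Int.toEReal_le_toEReal {m n : ℤ} : m.toEReal ≤ n.toEReal ↔ m ≤ n := by
  simp only [Int.toEReal, EReal.coe_le_coe_iff, Int.cast_le]

theorem Int.toEReal_inj {m n : ℤ} : m.toEReal = n.toEReal ↔ m = n := by
  simp only [Int.toEReal, EReal.coe_eq_coe_iff, Int.cast_inj]

theorem Int.toEReal_add (m n : ℤ) : (m + n).toEReal = m.toEReal + n.toEReal := by
  simp only [Int.toEReal, Int.cast_add, EReal.coe_add]

theorem Int.toEReal_sub (m n : ℤ) : (m - n).toEReal = m.toEReal - n.toEReal := by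
  simp only [Int.toEReal, Int.cast_sub, EReal.coe_sub]

theorem EReal.sub_toEReal_le_iff {a : EReal} {m n : ℤ} :
    a - n.toEReal ≤ m.toEReal ↔ a ≤ (m + n).toEReal := by
  rw [Int.toEReal_add]
  exact EReal.sub_le_iff_le_add (.inl (EReal.coe_ne_bot _)) (.inl (EReal.coe_ne_top _))

section BasePolyhedron

variable {β : Type*} {p : Finset β → EReal} {u v w y z : β → ℤ} {X Y : Finset β} {s t : β}

def memQ (p : Finset β → EReal) (u : β → ℤ) : Prop :=
  ∀ X : Finset β, p X ≤ (∑ s ∈ X, u s).toEReal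

def IsTight (p : Finset β → EReal) (u : β → ℤ) (X : Finset β) : Prop :=
  p X = (∑ s ∈ X, u s).toEReal

theorem IsTight.eq (h : IsTight p u X) : p X = (∑ s ∈ X, u s).toEReal := h

theorem IntegerValued.le_sub_one {n : ℤ} (hint : IntegerValued p) (h : p X ≤ n.toEReal)
    (hne : p X ≠ n.toEReal) : p X ≤ (n - 1).toEReal := by
  obtain hX | ⟨m, hm : p X = m.toEReal⟩ := hint X
  · simp [hX]
  rw [hm, Int.toEReal_le_toEReal] at h ⊢
  rw [hm, Ne, Int.toEReal_inj] at hne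
  omega

variable [DecidableEq β]

theorem IsTight.inter_union (hsup : Supermodular p) (hint : IntegerValued p) (hu : memQ p u)
    (hX : IsTight p u X) (hY : IsTight p u Y) : IsTight p u (X ∩ Y) ∧ IsTight p u (X ∪ Y) := by
  have h := hsup X Y
  rw [hX, hY, ← Int.toEReal_add, ← sum_union_inter, add_comm] at h
  obtain hI | ⟨i, hi : p (X ∩ Y) = i.toEReal⟩ := hint (X ∩ Y)
  · simp [hI, Int.toEReal] at h
  obtain hU | ⟨j, hj : p (X ∪ Y) = j.toEReal⟩ := hint (X ∪ Y)
  · simp [hU, Int.toEReal] at h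
  have hi' := hu (X ∩ Y)
  have hj' := hu (X ∪ Y)
  rw [hi, hj, ← Int.toEReal_add, Int.toEReal_le_toEReal] at h
  rw [hi, Int.toEReal_le_toEReal] at hi'
  rw [hj, Int.toEReal_le_toEReal] at hj'
  rw [IsTight, IsTight, hi, hj, Int.toEReal_inj, Int.toEReal_inj]
  omega

theorem sum_add_sum_le_of_isTight (hsup : Supermodular p) (hX : IsTight p u X)
    (hY : IsTight p v Y) (hu : memQ p w) (hv : memQ p y) :
    ∑ s ∈ X, u s + ∑ s ∈ Y, v s ≤ ∑ s ∈ X ∩ Y, w s + ∑ s ∈ X ∪ Y, y s := by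
  have h := (hsup X Y).trans (add_le_add (hu (X ∩ Y)) (hv (X ∪ Y)))
  rwa [hX, hY, ← Int.toEReal_add, ← Int.toEReal_add, Int.toEReal_le_toEReal] at h

theorem isTight_move (hX : IsTight p z X) (h : s ∈ X ↔ t ∈ X) : IsTight p (move z s t) X := by
  rw [IsTight, sum_move]
  by_cases hs : s ∈ X <;> simpa [hs, ← h] using hX.eq

theorem memQ_sub_single (hint : IntegerValued p) (hu : memQ p u)
    (hs : ∀ Z, IsTight p u Z → s ∉ Z) : memQ p (u - Pi.single s 1) := by
  intro Z
  simp only [Pi.sub_apply, sum_sub_distrib, sum_pi_single']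
  split_ifs with hsZ
  · exact hint.le_sub_one (hu Z) fun hZ => hs Z hZ hsZ
  · simpa using hu Z

theorem eq_of_minimal_of_forall_isTight_notMem (hint : IntegerValued p) {x : β → ℤ} {s : β}
    (hy : memQ p y) (hxy : ∀ s, x s ≤ y s)
    (hmin : ∀ y', memQ p y' → (∀ s, x s ≤ y' s) → (∀ s, y' s ≤ y s) → y' = y)
    (hs : ∀ Z, IsTight p y Z → s ∉ Z) : y s = x s := by
  by_contra hne
  have hsub : ∀ u, (y - Pi.single s 1 : β → ℤ) u = y u - if u = s then 1 else 0 := fun u => by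
    simp [Pi.single_apply]
  have h := congrFun (hmin _ (memQ_sub_single hint hy hs) (fun u => ?_) (fun u => ?_)) s
  · simp at h
  · have := hxy u
    rw [hsub]
    split_ifs with hu
    · subst hu
      omega
    · omega
  · rw [hsub]
    split_ifs <;> omega

variable [Fintype β]

theorem exists_isTight_minimal (hsup : Supermodular p) (hint : IntegerValued p)
    (hu : memBZ p u) (S : Finset β) :
    ∃ T, S ⊆ T ∧ IsTight p u T ∧ ∀ Z, IsTight p u Z → S ⊆ Z → T ⊆ Z := by
  classical
  let F := univ.filter fun Z => IsTight p u Z ∧ S ⊆ Z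
  have hF : F.inf id ∈ {Z | IsTight p u Z ∧ S ⊆ Z} :=
    inf_mem {Z | IsTight p u Z ∧ S ⊆ Z} ⟨hu.1.symm, subset_univ S⟩
      (fun X hX Y hY => ⟨(hX.1.inter_union hsup hint hu.2 hY.1).1, subset_inter hX.2 hY.2⟩)
      _ _ fun Z hZ => (mem_filter.mp hZ).2
  exact ⟨F.inf id, hF.2, hF.1, fun Z hZ hSZ =>
    inf_le (f := id) (mem_filter.mpr ⟨mem_univ Z, hZ, hSZ⟩)⟩

theorem exists_isTight_maximal_notMem (hp0 : p ∅ = 0) (hsup : Supermodular p)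
    (hint : IntegerValued p) (hu : memQ p u) (t : β) :
    ∃ W, t ∉ W ∧ IsTight p u W ∧ ∀ Z, IsTight p u Z → t ∉ Z → Z ⊆ W := by
  classical
  let F := univ.filter fun Z => IsTight p u Z ∧ t ∉ Z
  have hF : F.sup id ∈ {Z | IsTight p u Z ∧ t ∉ Z} :=
    sup_mem {Z | IsTight p u Z ∧ t ∉ Z} ⟨by simp [IsTight, hp0, Int.toEReal], notMem_empty t⟩
      (fun X hX Y hY => ⟨(hX.1.inter_union hsup hint hu hY.1).2, by simp [hX.2, hY.2]⟩)
      _ _ fun Z hZ => (mem_filter.mp hZ).2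
  exact ⟨F.sup id, hF.2, hF.1, fun Z hZ htZ =>
    le_sup (f := id) (mem_filter.mpr ⟨mem_univ Z, hZ, htZ⟩)⟩

/-- By integrality, a non-tight set exceeds `p` by at least one. -/
theorem memBZ_move (hint : IntegerValued p) (hu : memBZ p u)
    (hts : ∀ Z, IsTight p u Z → t ∈ Z → s ∈ Z) : memBZ p (move u s t) := by
  refine ⟨?_, fun Z => ?_⟩
  · show (∑ x, move u s t x).toEReal = p univ
    rw [sum_move, if_pos (mem_univ s), if_pos (mem_univ t), add_sub_cancel_right]
    exact hu.1
  · show p Z ≤ (∑ x ∈ Z, move u s t x).toEReal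
    rw [sum_move]
    by_cases htZ : t ∈ Z <;> by_cases hsZ : s ∈ Z <;>
      simp only [htZ, hsZ, if_true, if_false, add_sub_cancel_right, add_zero, sub_zero]
    · exact hu.2 Z
    · exact hint.le_sub_one (hu.2 Z) fun hZ => hsZ (hts Z hZ htZ)
    · exact (hu.2 Z).trans (Int.toEReal_le_toEReal.mpr (by omega))
    · exact hu.2 Z

end BasePolyhedron

section Exchange

variable {β : Type*} [Fintype β] [DecidableEq β] {p : Finset β → EReal} {u v z : β → ℤ} {t : β}

/-- Symmetric exchange: with `W` the largest `u`-tight set avoiding `t` and `T` the smallest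
`v`-tight set containing `t`, supermodularity gives `v(T \ W) ≤ u(T \ W)`, so some `s ∈ T \ W`
has `v s < u s`, and neither `W` nor `T` blocks the two unit moves. -/
theorem exists_exchange (hp0 : p ∅ = 0) (hsup : Supermodular p) (hint : IntegerValued p)
    (hu : memBZ p u) (hv : memBZ p v) (ht : u t < v t) :
    ∃ s, v s < u s ∧ memBZ p (move u t s) ∧ memBZ p (move v s t) := by
  obtain ⟨W, htW, hWt, hWmax⟩ := exists_isTight_maximal_notMem hp0 hsup hint hu.2 t
  obtain ⟨T, htT, hTt, hTmin⟩ := exists_isTight_minimal hsup hint hv {t}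
  have hle : ∑ s ∈ T \ W, v s ≤ ∑ s ∈ T \ W, u s := by
    have h := sum_add_sum_le_of_isTight hsup hTt hWt hv.2 hu.2
    rw [← sum_inter_add_sum_sdiff T W, ← sum_sdiff (subset_union_right (s₁ := T)),
      union_sdiff_right] at h
    omega
  obtain ⟨s, hs, hvs⟩ : ∃ s ∈ T \ W, v s < u s := by
    by_contra! h
    exact hle.not_gt (sum_lt_sum h ⟨t, mem_sdiff.mpr ⟨htT (mem_singleton_self t), htW⟩, ht⟩)
  rw [mem_sdiff] at hs
  refine ⟨s, hvs, memBZ_move hint hu fun Z hZ hsZ => ?_,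
    memBZ_move hint hv fun Z hZ htZ => hTmin Z hZ (singleton_subset_iff.mpr htZ) hs.1⟩
  by_contra htZ
  exact hs.2 (hWmax Z hZ htZ hsZ)

/-- For another base `w`, symmetric exchange yields the base `move w t s`, closer to `z` and, by
the exchange condition at `z`, lexicographically no larger than `w`. -/
theorem decMinZ_of_exchange (hp0 : p ∅ = 0) (hsup : Supermodular p) (hint : IntegerValued p)
    (hz : memBZ p z) (hex : ∀ s t, z s + 2 ≤ z t → ¬ memBZ p (move z s t)) : DecMinZ p z := by
  refine ⟨hz, fun w hw => lexLE_iff_le.mpr ?_⟩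
  induction hn : ∑ u, (w u - z u).natAbs using Nat.strong_induction_on generalizing w with
  | _ n ih =>
  obtain rfl | hne := eq_or_ne w z
  · exact le_rfl
  obtain ⟨t, ht⟩ : ∃ t, w t < z t := by
    by_contra! hle
    have hsum : ∑ u, z u = ∑ u, w u := Int.toEReal_inj.mp (hz.1.trans hw.1.symm)
    exact hne <| funext fun u =>
      ((sum_eq_sum_iff_of_le fun i _ => hle i).mp hsum u (mem_univ u)).symm
  obtain ⟨s, hs, hw', hz'⟩ := exists_exchange hp0 hsup hint hw hz ht
  have hzs : z t ≤ z s + 1 := by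
    by_contra! h
    exact hex s t (by omega) hz'
  have hcloser : ∑ u, (move w t s u - z u).natAbs < n := by
    rw [← hn]
    refine sum_lt_sum (fun u _ => ?_) ⟨t, mem_univ t, ?_⟩ <;>
    · simp only [move_apply]
      split_ifs <;> subst_vars <;> omega
  calc sortDescZ z ≤ sortDescZ (move w t s) := ih _ hcloser _ hw' rfl
    _ ≤ sortDescZ w := sortDescOn_move_le (mem_univ t) (mem_univ s) (by omega)

end Exchange

section RestrictionContraction

variable {β : Type*} [Fintype β] {p : Finset β → EReal} {u v w y z : β → ℤ} {S : Finset β}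
  {a : ℤ}

theorem memRestrict_of_memBZ (hw : memBZ p w) (hS : IsTight p w S) : memRestrict p S w :=
  ⟨hS.symm, fun X _ => hw.2 X⟩

variable [DecidableEq β]

theorem memContract_of_memBZ (hw : memBZ p w) (hS : IsTight p w S) : memContract p S w := by
  refine ⟨?_, fun X hX => ?_⟩
  · show (∑ x ∈ univ \ S, w x).toEReal = p univ - p S
    have hw₁ : (∑ x, w x).toEReal = p univ := hw.1
    rw [← hw₁, hS.eq, ← Int.toEReal_sub, ← sum_sdiff (subset_univ S), add_sub_cancel_right]
  · show p (X ∪ S) - p S ≤ (∑ x ∈ X, w x).toEReal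
    rw [hS.eq, EReal.sub_toEReal_le_iff,
      ← sum_union (disjoint_of_subset_left hX sdiff_disjoint)]
    exact hw.2 _

/-- Supermodularity applied to `Z` and the tight set `S` splits the constraint for `Z` into those
for `Z ∩ S` (restriction) and `Z \ S` (contraction). -/
theorem memBZ_piecewise (hsup : Supermodular p) (hint : IntegerValued p)
    (hu : memRestrict p S u) (hv : memContract p S v) : memBZ p (S.piecewise u v) := by
  have hS : p S = (∑ x ∈ S, u x).toEReal := hu.1.symm
  refine ⟨?_, fun Z => ?_⟩
  · show (∑ x, S.piecewise u v x).toEReal = p univ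
    have hv₁ : (∑ x ∈ univ \ S, v x).toEReal = p univ - p S := hv.1
    rw [sum_piecewise, univ_inter, Int.toEReal_add, hv₁, hS, add_comm]
    exact EReal.sub_add_cancel (b := ((∑ x ∈ S, u x : ℤ) : ℝ))
  obtain hZ | ⟨m, hm : p Z = m.toEReal⟩ := hint Z
  · simp [hZ]
  have hinter : p (Z ∩ S) ≤ (∑ x ∈ Z ∩ S, u x).toEReal := hu.2 _ inter_subset_right
  have hunion : p (Z ∪ S) ≤ (∑ x ∈ Z \ S, v x + ∑ x ∈ S, u x).toEReal := by
    have h : p (Z \ S ∪ S) - p S ≤ (∑ x ∈ Z \ S, v x).toEReal :=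
      hv.2 (Z \ S) (sdiff_subset_sdiff (subset_univ Z) le_rfl)
    rwa [sdiff_union_self_eq_union, hS, EReal.sub_toEReal_le_iff] at h
  have h := (hsup Z S).trans (add_le_add hinter hunion)
  rw [hm, hS, ← Int.toEReal_add, ← Int.toEReal_add, Int.toEReal_le_toEReal] at h
  show p Z ≤ (∑ x ∈ Z, S.piecewise u v x).toEReal
  rw [hm, sum_piecewise, Int.toEReal_le_toEReal]
  omega

theorem memBZ_of_memRestrict_of_memContract (hsup : Supermodular p) (hint : IntegerValued p)
    (hu : memRestrict p S w) (hv : memContract p S w) : memBZ p w :=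
  piecewise_same S w ▸ memBZ_piecewise hsup hint hu hv


theorem le_of_isDecMinOn_restrict (hp0 : p ∅ = 0) (hsup : Supermodular p)
    (hint : IntegerValued p) (hz : IsDecMinOn (memRestrict p S) S z)
    (hzc : memContract p S z) (hy : memQ p y) (hyS : IsTight p y S)
    (hya : ∀ s ∈ S, a ≤ y s) : ∀ s ∈ S, a ≤ z s := by
  intro t ht
  by_contra! hzt
  have hzB := memBZ_of_memRestrict_of_memContract hsup hint hz.1 hzc
  have hyB := memBZ_piecewise hsup hint ⟨hyS.symm, fun X _ => hy X⟩ hzc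
  obtain ⟨s, hs, hmove, -⟩ := exists_exchange hp0 hsup hint hzB hyB
    (by rw [piecewise_eq_of_mem _ _ _ ht]; linarith [hya t ht])
  have hsS : s ∈ S := by
    by_contra hsS
    rw [piecewise_eq_of_notMem _ _ _ hsS] at hs
    exact lt_irrefl _ hs
  rw [piecewise_eq_of_mem _ _ _ hsS] at hs
  exact hz.not_move ht hsS (by linarith [hya s hsS])
    (memRestrict_of_memBZ hmove (isTight_move hz.1.1.symm (iff_of_true ht hsS)))

/-- If `z t ≥ a + 2` off `S`, the smallest `z`-tight set `T ⊇ S ∪ {t}` satisfies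
`z(T \ S) = p(T) - p(S) ≤ y(T \ S) ≤ (a + 1)|T \ S|`, so it contains an `s ∉ S` with `z s ≤ a`,
and no `z`-tight set blocks moving a unit from `t` to `s`. -/
theorem le_add_one_of_isDecMinOn_contract (hsup : Supermodular p) (hint : IntegerValued p)
    (hz : IsDecMinOn (memContract p S) (univ \ S) z) (hzB : memBZ p z) (hzS : IsTight p z S)
    (hy : memQ p y) (hyS : IsTight p y S) (hya : ∀ s ∉ S, y s ≤ a + 1) :
    ∀ t ∈ univ \ S, z t ≤ a + 1 := by
  intro t ht
  by_contra! hzt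
  have htS := (mem_sdiff.mp ht).2
  obtain ⟨T, hST, hTt, hTmin⟩ := exists_isTight_minimal hsup hint hzB (insert t S)
  have hbound : ∑ u ∈ T \ S, z u ≤ ∑ u ∈ T \ S, (a + 1) := by
    have hzy : ∑ u ∈ T, z u ≤ ∑ u ∈ T, y u := by
      rw [← Int.toEReal_le_toEReal, ← hTt.eq]
      exact hy T
    have hSS : ∑ u ∈ S, z u = ∑ u ∈ S, y u := Int.toEReal_inj.mp (hzS.eq.symm.trans hyS.eq)
    have hyT : ∑ u ∈ T \ S, y u ≤ ∑ u ∈ T \ S, (a + 1) :=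
      sum_le_sum fun u hu => hya u (mem_sdiff.mp hu).2
    have hsplit := sum_sdiff (f := z) ((subset_insert t S).trans hST)
    have hsplit' := sum_sdiff (f := y) ((subset_insert t S).trans hST)
    omega
  obtain ⟨s, hs, hzs⟩ : ∃ s ∈ T \ S, z s < a + 1 := by
    by_contra! h
    refine hbound.not_gt (sum_lt_sum h ⟨t, mem_sdiff.mpr ⟨hST (mem_insert_self t S), htS⟩, ?_⟩)
    omega
  rw [mem_sdiff] at hs
  have hmove : memBZ p (move z s t) := memBZ_move hint hzB fun Z hZ htZ => by
    have hZS := (hZ.inter_union hsup hint hzB.2 hzS).2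
    have := hTmin _ hZS (insert_subset (mem_union_left S htZ) subset_union_right) hs.1
    exact (mem_union.mp this).resolve_right hs.2
  exact hz.not_move (mem_sdiff.mpr ⟨mem_univ s, hs.2⟩) ht (by omega)
    (memContract_of_memBZ hmove (isTight_move hzS (iff_of_false hs.2 htS)))

/-- An improving move `z + χ_s − χ_t` cannot go from `S` to its complement (by `hsep`), nor the
other way (`S` is tight), and within either side it contradicts dec-minimality. -/
theorem not_memBZ_move_of_isDecMinOn (hzplus : IsDecMinOn (memRestrict p S) S z)
    (hzminus : IsDecMinOn (memContract p S) (univ \ S) z)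
    (hsep : ∀ s ∈ S, ∀ t ∉ S, z t < z s + 2) (s t : β) (hst : z s + 2 ≤ z t) :
    ¬ memBZ p (move z s t) := by
  intro hw
  have hzS : IsTight p z S := hzplus.1.1.symm
  by_cases ht : t ∈ S <;> by_cases hs : s ∈ S
  · exact hzplus.not_move hs ht hst
      (memRestrict_of_memBZ hw (isTight_move hzS (iff_of_true hs ht)))
  · have h : p S ≤ (∑ u ∈ S, move z s t u).toEReal := hw.2 S
    rw [hzS.eq, sum_move, if_neg hs, if_pos ht, Int.toEReal_le_toEReal] at h
    omega
  · exact absurd hst (not_le.mpr (hsep s hs t ht))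
  · exact hzminus.not_move (mem_sdiff.mpr ⟨mem_univ s, hs⟩) (mem_sdiff.mpr ⟨mem_univ t, ht⟩) hst
      (memContract_of_memBZ hw (isTight_move hzS (iff_of_false hs ht)))

end RestrictionContraction

theorem groenevelt_step_output_decmin_general (p : Finset α → EReal) (hp0 : p ∅ = 0)
    (hsup : Supermodular p) (hint : IntegerValued p)
    (a : ℤ)
    (U : Finset α)
    (x : α → ℤ) (hxdef : x = fun s => a + (if s ∈ U then 1 else 0))
    (y : α → ℤ)
    (hyQ : ∀ X : Finset α, p X ≤ ((((∑ s ∈ X, y s : ℤ) : ℝ)) : EReal))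
    (hyx : ∀ s, x s ≤ y s)
    (hymin : ∀ y' : α → ℤ,
      (∀ X : Finset α, p X ≤ ((((∑ s ∈ X, y' s : ℤ) : ℝ)) : EReal)) →
      (∀ s, x s ≤ y' s) → (∀ s, y' s ≤ y s) → y' = y)
    (Splus : Finset α)
    (htight : p Splus = ((((∑ s ∈ Splus, y s : ℤ) : ℝ)) : EReal))
    (hlargest : ∀ X : Finset α,
      p X = ((((∑ s ∈ X, y s : ℤ) : ℝ)) : EReal) → X ⊆ Splus)
    (z : α → ℤ)
    (hzplus : memRestrict p Splus z ∧ ∀ w : α → ℤ, memRestrict p Splus w →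
      lexLE (sortDescOn Splus z) (sortDescOn Splus w))
    (hzminus : memContract p Splus z ∧ ∀ w : α → ℤ, memContract p Splus w →
      lexLE (sortDescOn (Finset.univ \ Splus) z) (sortDescOn (Finset.univ \ Splus) w)) :
    (∀ s ∈ Splus, a ≤ z s) ∧
    (∀ s ∈ Finset.univ \ Splus, z s ≤ a + 1) ∧
    (∀ s t : α, z s + 2 ≤ z t → ¬ memBZ p (move z s t)) ∧
    DecMinZ p z := by
  have hx : ∀ s, a ≤ x s ∧ x s ≤ a + 1 := by
    subst hxdef
    intro s
    dsimp only
    split_ifs <;> omega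
  have hy_out : ∀ s ∉ Splus, y s = x s := fun s hs =>
    eq_of_minimal_of_forall_isTight_notMem hint hyQ hyx hymin fun Z hZ hsZ => hs (hlargest Z hZ hsZ)
  have hz := memBZ_of_memRestrict_of_memContract hsup hint hzplus.1 hzminus.1
  have hlow := le_of_isDecMinOn_restrict hp0 hsup hint hzplus hzminus.1 hyQ htight
    fun s _ => (hx s).1.trans (hyx s)
  have hhigh := le_add_one_of_isDecMinOn_contract hsup hint hzminus hz hzplus.1.1.symm hyQ htight
    fun s hs => hy_out s hs ▸ (hx s).2
  have hexch := not_memBZ_move_of_isDecMinOn hzplus hzminus fun s hs t ht => by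
    have := hlow s hs
    have := hhigh t (mem_sdiff.mpr ⟨mem_univ t, ht⟩)
    omega
  exact ⟨hlow, hhigh, hexch, decMinZ_of_exchange hp0 hsup hint hz hexch⟩

/-- Correctness of (one recursive step of) the Groenevelt-type decomposition
algorithm: with `a = ⌊p(S)/|S|⌋`, `x = a·χ_S + χ_U` (`|U| = k = p(S) − a|S|`),
`x ∉ B ∩ ℤ^S`, `y` a minimal integral element of `Q` above `x`, `S₊` the largest
`y`-tight set and `S₋ = S − S₊`, if `z` restricted to `S₊` is dec-min in the
restriction and `z` restricted to `S₋` is dec-min in the contraction, then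
`z(s) ≥ a` on `S₊`, `z(s) ≤ a+1` on `S₋`, `z` satisfies the exchange condition,
and hence `z` is a dec-min element of `B ∩ ℤ^S`. -/
theorem groenevelt_step_output_decmin [Nonempty α] (p : Finset α → EReal) (hp0 : p ∅ = 0)
    (hsup : Supermodular p) (hint : IntegerValued p)
    (pS : ℤ) (hpS : p (Finset.univ : Finset α) = ((pS : ℝ) : EReal))
    (a : ℤ) (ha1 : a * (Fintype.card α : ℤ) ≤ pS)
    (ha2 : pS < (a + 1) * (Fintype.card α : ℤ))
    (U : Finset α) (hU : (U.card : ℤ) = pS - a * (Fintype.card α : ℤ))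
    (x : α → ℤ) (hxdef : x = fun s => a + (if s ∈ U then 1 else 0))
    (hxB : ¬ memBZ p x)
    (y : α → ℤ)
    (hyQ : ∀ X : Finset α, p X ≤ ((((∑ s ∈ X, y s : ℤ) : ℝ)) : EReal))
    (hyx : ∀ s, x s ≤ y s)
    (hymin : ∀ y' : α → ℤ,
      (∀ X : Finset α, p X ≤ ((((∑ s ∈ X, y' s : ℤ) : ℝ)) : EReal)) →
      (∀ s, x s ≤ y' s) → (∀ s, y' s ≤ y s) → y' = y)
    (Splus : Finset α)
    (htight : p Splus = ((((∑ s ∈ Splus, y s : ℤ) : ℝ)) : EReal))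
    (hlargest : ∀ X : Finset α,
      p X = ((((∑ s ∈ X, y s : ℤ) : ℝ)) : EReal) → X ⊆ Splus)
    (z : α → ℤ)
    (hzplus : memRestrict p Splus z ∧ ∀ w : α → ℤ, memRestrict p Splus w →
      lexLE (sortDescOn Splus z) (sortDescOn Splus w))
    (hzminus : memContract p Splus z ∧ ∀ w : α → ℤ, memContract p Splus w →
      lexLE (sortDescOn (Finset.univ \ Splus) z) (sortDescOn (Finset.univ \ Splus) w)) :
    (∀ s ∈ Splus, a ≤ z s) ∧
    (∀ s ∈ Finset.univ \ Splus, z s ≤ a + 1) ∧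
    (∀ s t : α, z s + 2 ≤ z t → ¬ memBZ p (move z s t)) ∧
    DecMinZ p z :=
  groenevelt_step_output_decmin_general p hp0 hsup hint a U x hxdef y hyQ hyx hymin Splus htight
    hlargest z hzplus hzminus
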